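/- Let k ≥ 4 be an integer. Let q : (0,1] → ℝ be absolutely continuous on every compact subinterval of (0,1] with q(x) = −∫_x^1 q'(t) dt for all x ∈ (0,1], and suppose 0 < ∫₀¹ x^{k−1} q'(x)² dx < ∞. Then (k−1) ∫₀¹ x^{k−2} q(x)² dx < (4/(k + log₂ k − 5)) ∫₀¹ x^{k−1} q'(x)² dx. -/

import Mathlib

/-!
Fix `c = k/2 + 1`. For `x ∈ (0,1]`, Cauchy–Schwarz with the weight `t^c` gives
`q(x)² ≤ (∫ₓ¹ t^(-c) dt) · ∫ₓ¹ t^c q'(t)² dt`. Integrating against `x^(k-2)` and exchanging the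
order of integration bounds `∫₀¹ x^(k-2) q²` by `∫₀¹ t^c H(t) q'(t)² dt`, where
`H(t) = ∫₀ᵗ x^(k-2) ∫ₓ¹ s^(-c) ds dx` is explicit. By Young's inequality `t^c H(t) ≤ C_k t^(k-1)`,
`C_k` being the maximum of `t ↦ t^(1-k+c) H(t)` over `t > 0`. Finally `e^y ≥ 1 + y` and
`1/2 < log 2 < 5/4` give `(k-1) C_k < 4/(k + log₂ k - 5)`.
-/

open MeasureTheory Set

open scoped ENNReal

section General

variable {α : Type*} [MeasurableSpace α] {μ : Measure α}

theorem sq_lintegral_mul_le_lintegral_sq_mul_lintegral_sq {f g : α → ℝ≥0∞}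
    (hf : AEMeasurable f μ) (hg : AEMeasurable g μ) :
    (∫⁻ a, f a * g a ∂μ) ^ 2 ≤ (∫⁻ a, f a ^ 2 ∂μ) * ∫⁻ a, g a ^ 2 ∂μ := by
  have h := ENNReal.lintegral_mul_le_Lp_mul_Lq μ Real.HolderConjugate.two_two hf hg
  simp only [Pi.mul_apply, ENNReal.rpow_two] at h
  calc (∫⁻ a, f a * g a ∂μ) ^ 2
      ≤ ((∫⁻ a, f a ^ 2 ∂μ) ^ (1 / 2 : ℝ) * (∫⁻ a, g a ^ 2 ∂μ) ^ (1 / 2 : ℝ)) ^ 2 :=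
        pow_le_pow_left₀ zero_le h 2
    _ = (∫⁻ a, f a ^ 2 ∂μ) * ∫⁻ a, g a ^ 2 ∂μ := by
        rw [mul_pow, ← ENNReal.rpow_natCast, ← ENNReal.rpow_natCast, ← ENNReal.rpow_mul,
          ← ENNReal.rpow_mul]
        norm_num

theorem sq_lintegral_enorm_le_lintegral_mul_lintegral_inv {f w : α → ℝ} (hf : AEMeasurable f μ)
    (hw : AEMeasurable w μ) (hw_pos : ∀ᵐ a ∂μ, 0 < w a) :
    (∫⁻ a, ‖f a‖ₑ ∂μ) ^ 2 ≤
      (∫⁻ a, ENNReal.ofReal (w a * f a ^ 2) ∂μ) * ∫⁻ a, ENNReal.ofReal (w a)⁻¹ ∂μ := by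
  have hcs := sq_lintegral_mul_le_lintegral_sq_mul_lintegral_sq
    (f := fun a => ENNReal.ofReal √(w a) * ‖f a‖ₑ) (g := fun a => ENNReal.ofReal (√(w a))⁻¹)
    (by fun_prop) (by fun_prop)
  have hprod : ∀ᵐ a ∂μ, ENNReal.ofReal √(w a) * ‖f a‖ₑ * ENNReal.ofReal (√(w a))⁻¹ = ‖f a‖ₑ := by
    filter_upwards [hw_pos] with a ha
    have hs : 0 < √(w a) := Real.sqrt_pos.2 ha
    rw [mul_right_comm, ← ENNReal.ofReal_mul hs.le, mul_inv_cancel₀ hs.ne', ENNReal.ofReal_one,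
      one_mul]
  have hsq : ∀ᵐ a ∂μ, (ENNReal.ofReal √(w a) * ‖f a‖ₑ) ^ 2 = ENNReal.ofReal (w a * f a ^ 2) := by
    filter_upwards [hw_pos] with a ha
    rw [mul_pow, ← ENNReal.ofReal_pow (Real.sqrt_nonneg _), Real.sq_sqrt ha.le,
      Real.enorm_eq_ofReal_abs, ← ENNReal.ofReal_pow (abs_nonneg _), sq_abs,
      ← ENNReal.ofReal_mul ha.le]
  have hsq_inv : ∀ᵐ a ∂μ, ENNReal.ofReal (√(w a))⁻¹ ^ 2 = ENNReal.ofReal (w a)⁻¹ := by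
    filter_upwards [hw_pos] with a ha
    rw [← ENNReal.ofReal_pow (inv_nonneg.2 (Real.sqrt_nonneg _)), inv_pow, Real.sq_sqrt ha.le]
  rwa [lintegral_congr_ae hprod, lintegral_congr_ae hsq, lintegral_congr_ae hsq_inv] at hcs

theorem integral_le_of_lintegral_ofReal_le
    {f : α → ℝ} {r : ℝ} (hf : 0 ≤ᵐ[μ] f) (hr : 0 ≤ r)
    (h : ∫⁻ a, ENNReal.ofReal (f a) ∂μ ≤ ENNReal.ofReal r) : ∫ a, f a ∂μ ≤ r := by
  by_cases hfi : Integrable f μ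
  · rwa [← ofReal_integral_eq_lintegral_ofReal hfi hf, ENNReal.ofReal_le_ofReal_iff hr] at h
  · rw [integral_undef hfi]; exact hr

theorem lintegral_mul_setLIntegral_Ioi_eq [LinearOrder α] [TopologicalSpace α]
    [OrderClosedTopology α] [OpensMeasurableSpace α] [SecondCountableTopology α] [SFinite μ]
    {f g : α → ℝ≥0∞}
    (hf : AEMeasurable f μ) (hg : AEMeasurable g μ) :
    ∫⁻ x, f x * ∫⁻ t in Ioi x, g t ∂μ ∂μ = ∫⁻ t, g t * ∫⁻ x in Iio t, f x ∂μ ∂μ := by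
  let F : α → α → ℝ≥0∞ := fun x t =>
    {p : α × α | p.1 < p.2}.indicator (fun p => f p.1 * g p.2) (x, t)
  have hF : AEMeasurable (Function.uncurry F) (μ.prod μ) :=
    (hf.comp_fst.mul hg.comp_snd).indicator (measurableSet_lt measurable_fst measurable_snd)
  have hx : ∀ x, ∫⁻ t, F x t ∂μ = f x * ∫⁻ t in Ioi x, g t ∂μ := fun x => by
    rw [← lintegral_const_mul'' _ hg.restrict, ← lintegral_indicator measurableSet_Ioi]
    rfl
  have ht : ∀ t, ∫⁻ x, F x t ∂μ = g t * ∫⁻ x in Iio t, f x ∂μ := fun t => by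
    rw [← lintegral_const_mul'' _ hf.restrict, ← lintegral_indicator measurableSet_Iio]
    simp_rw [mul_comm (g t)]
    rfl
  simp_rw [← hx, ← ht]
  exact lintegral_lintegral_swap hF

end General

theorem aemeasurable_restrict_Ioc_of_intervalIntegrable {f : ℝ → ℝ} {a b : ℝ}
    (hf : ∀ x ∈ Ioc a b, IntervalIntegrable f volume x b) :
    AEMeasurable f (volume.restrict (Ioc a b)) := by
  have hunion : Ioc a b = ⋃ n : ℕ, Ioc (a + 1 / (n + 1)) b := by
    ext y
    simp only [mem_Ioc, mem_iUnion]
    constructor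
    · rintro ⟨hay, hyb⟩
      obtain ⟨n, hn⟩ := exists_nat_one_div_lt (sub_pos.2 hay)
      exact ⟨n, by linarith, hyb⟩
    · rintro ⟨n, hny, hyb⟩
      exact ⟨lt_trans (lt_add_of_pos_right a Nat.one_div_pos_of_nat) hny, hyb⟩
  rw [hunion, aemeasurable_iUnion_iff]
  intro n
  rcases le_or_gt (a + 1 / (n + 1)) b with hb | hb
  · exact (hf _ ⟨lt_add_of_pos_right a Nat.one_div_pos_of_nat, hb⟩).1.aestronglyMeasurable
      |>.aemeasurable
  · rw [Ioc_eq_empty (not_lt.2 hb.le), Measure.restrict_empty]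
    exact aemeasurable_zero_measure

theorem integral_Ioc_rpow_neg {c x : ℝ} (hc : c ≠ 1) (hx : x ∈ Ioc (0 : ℝ) 1) :
    ∫ t in Ioc x 1, (t ^ c)⁻¹ = (x ^ (1 - c) - 1) / (c - 1) := by
  have h0 : (0 : ℝ) ∉ uIcc x 1 := by
    rw [uIcc_of_le hx.2]; exact fun h => hx.1.not_ge h.1
  rw [← intervalIntegral.integral_of_le hx.2,
    intervalIntegral.integral_congr (g := fun t => t ^ (-c)) fun t ht =>
      (Real.rpow_neg (hx.1.le.trans (uIcc_of_le hx.2 ▸ ht).1) c).symm,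
    integral_rpow (Or.inr ⟨fun h => hc (by linarith), h0⟩), Real.one_rpow]
  have : c - 1 ≠ 0 := sub_ne_zero.2 hc
  have : -c + 1 ≠ 0 := fun h => hc (by linarith)
  field_simp
  ring_nf

theorem ofReal_sq_intervalIntegral_le {f : ℝ → ℝ} {c x : ℝ} (hc : c ≠ 1) (hx : x ∈ Ioc (0 : ℝ) 1)
    (hf : IntervalIntegrable f volume x 1) :
    ENNReal.ofReal ((∫ t in x..1, f t) ^ 2) ≤
      ENNReal.ofReal ((x ^ (1 - c) - 1) / (c - 1)) *
        ∫⁻ t in Ioc x 1, ENNReal.ofReal (t ^ c * f t ^ 2) := by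
  have hpos : ∀ᵐ t ∂(volume.restrict (Ioc x 1)), 0 < t ^ c := by
    filter_upwards [ae_restrict_mem measurableSet_Ioc] with t ht
    exact Real.rpow_pos_of_pos (hx.1.trans ht.1) c
  have hweight : ∫⁻ t in Ioc x 1, ENNReal.ofReal (t ^ c)⁻¹ =
      ENNReal.ofReal ((x ^ (1 - c) - 1) / (c - 1)) := by
    have hcont : ContinuousOn (fun t : ℝ => (t ^ c)⁻¹) (Icc x 1) :=
      (continuousOn_id.rpow_const fun t ht => Or.inl (hx.1.trans_le ht.1).ne').inv₀
        fun t ht => (Real.rpow_pos_of_pos (hx.1.trans_le ht.1) c).ne'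
    rw [← ofReal_integral_eq_lintegral_ofReal
      ((hcont.integrableOn_compact isCompact_Icc).mono_set Ioc_subset_Icc_self)
      (hpos.mono fun t ht => (inv_pos.2 ht).le), integral_Ioc_rpow_neg hc hx]
  calc ENNReal.ofReal ((∫ t in x..1, f t) ^ 2)
      ≤ (∫⁻ t in Ioc x 1, ‖f t‖ₑ) ^ 2 := by
        rw [← sq_abs, ENNReal.ofReal_pow (abs_nonneg _), ← Real.enorm_eq_ofReal_abs,
          intervalIntegral.integral_of_le hx.2]
        gcongr
        exact enorm_integral_le_lintegral_enorm _
    _ ≤ (∫⁻ t in Ioc x 1, ENNReal.ofReal (t ^ c * f t ^ 2)) *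
          ∫⁻ t in Ioc x 1, ENNReal.ofReal (t ^ c)⁻¹ :=
        sq_lintegral_enorm_le_lintegral_mul_lintegral_inv hf.1.aestronglyMeasurable.aemeasurable
          (by fun_prop) hpos
    _ = _ := by rw [hweight, mul_comm]

noncomputable def hardyKernel (p c t : ℝ) : ℝ :=
  (t ^ (p + 2 - c) / (p + 2 - c) - t ^ (p + 1) / (p + 1)) / (c - 1)

theorem setLIntegral_Ioo_rpow_mul_eq_hardyKernel {p c t : ℝ} (hc : 1 < c) (hpc : c < p + 2)
    (ht : t ∈ Ioc (0 : ℝ) 1) :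
    ∫⁻ x in Ioo 0 t, ENNReal.ofReal (x ^ p * ((x ^ (1 - c) - 1) / (c - 1))) =
      ENNReal.ofReal (hardyKernel p c t) := by
  have hexp₁ : -1 < p + 1 - c := by linarith
  have hexp₂ : -1 < p := by linarith
  have hint : IntervalIntegrable (fun x : ℝ => (x ^ (p + 1 - c) - x ^ p) / (c - 1)) volume 0 t :=
    ((intervalIntegral.intervalIntegrable_rpow' hexp₁).sub
      (intervalIntegral.intervalIntegrable_rpow' hexp₂)).div_const _
  have heq : EqOn (fun x : ℝ => x ^ p * ((x ^ (1 - c) - 1) / (c - 1)))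
      (fun x => (x ^ (p + 1 - c) - x ^ p) / (c - 1)) (Ioo 0 t) := fun x hx => by
    simp only
    rw [show p + 1 - c = p + (1 - c) by ring, Real.rpow_add hx.1]
    ring
  have hnonneg : 0 ≤ᵐ[volume.restrict (Ioo 0 t)]
      fun x : ℝ => x ^ p * ((x ^ (1 - c) - 1) / (c - 1)) := by
    filter_upwards [ae_restrict_mem measurableSet_Ioo] with x hx
    have : 1 ≤ x ^ (1 - c) := Real.one_le_rpow_of_pos_of_le_one_of_nonpos hx.1
      (hx.2.le.trans ht.2) (by linarith)
    exact mul_nonneg (Real.rpow_nonneg hx.1.le _) (div_nonneg (by linarith) (by linarith))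
  rw [← ofReal_integral_eq_lintegral_ofReal
    (((hint.1).mono_set Ioo_subset_Ioc_self).congr_fun heq.symm measurableSet_Ioo) hnonneg,
    setIntegral_congr_fun measurableSet_Ioo heq, ← integral_Ioc_eq_integral_Ioo,
    ← intervalIntegral.integral_of_le ht.1.le, intervalIntegral.integral_div,
    intervalIntegral.integral_sub (intervalIntegral.intervalIntegrable_rpow' hexp₁)
      (intervalIntegral.intervalIntegrable_rpow' hexp₂),
    integral_rpow (Or.inl hexp₁), integral_rpow (Or.inl hexp₂),
    Real.zero_rpow (by linarith), Real.zero_rpow (by linarith), hardyKernel]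
  ring_nf

theorem lintegral_rpow_mul_sq_le_lintegral_hardyKernel {p c : ℝ} (hc : 1 < c) (hpc : c < p + 2)
    {q q' : ℝ → ℝ} (hloc : ∀ x ∈ Ioc (0 : ℝ) 1, IntervalIntegrable q' volume x 1)
    (hq : ∀ x ∈ Ioc (0 : ℝ) 1, q x = -∫ t in x..1, q' t) :
    ∫⁻ x in Ioc 0 1, ENNReal.ofReal (x ^ p * q x ^ 2) ≤
      ∫⁻ t in Ioc 0 1, ENNReal.ofReal (t ^ c * q' t ^ 2 * hardyKernel p c t) := by
  set μ := volume.restrict (Ioc (0 : ℝ) 1)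
  set w : ℝ → ℝ≥0∞ := fun x => ENNReal.ofReal (x ^ p * ((x ^ (1 - c) - 1) / (c - 1)))
  set ψ : ℝ → ℝ≥0∞ := fun t => ENNReal.ofReal (t ^ c * q' t ^ 2)
  have hw : AEMeasurable w μ := by fun_prop
  have hψ : AEMeasurable ψ μ := by
    have := aemeasurable_restrict_Ioc_of_intervalIntegrable hloc
    fun_prop
  have hsq : ∀ x ∈ Ioc (0 : ℝ) 1,
      ENNReal.ofReal (x ^ p * q x ^ 2) ≤ w x * ∫⁻ t in Ioi x, ψ t ∂μ := fun x hx => by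
    rw [Measure.restrict_restrict measurableSet_Ioi, inter_comm, Ioc_inter_Ioi,
      sup_eq_right.2 hx.1.le, hq x hx, neg_sq]
    simp only [w]
    rw [ENNReal.ofReal_mul (Real.rpow_nonneg hx.1.le _),
      ENNReal.ofReal_mul (Real.rpow_nonneg hx.1.le _), mul_assoc]
    gcongr
    exact ofReal_sq_intervalIntegral_le hc.ne' hx (hloc x hx)
  have hkernel : ∀ t ∈ Ioc (0 : ℝ) 1, ψ t * ∫⁻ x in Iio t, w x ∂μ =
      ENNReal.ofReal (t ^ c * q' t ^ 2 * hardyKernel p c t) := fun t ht => by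
    have hIoo : Iio t ∩ Ioc 0 1 = Ioo 0 t := by
      ext y; simp only [mem_inter_iff, mem_Iio, mem_Ioc, mem_Ioo]; grind
    rw [Measure.restrict_restrict measurableSet_Iio, hIoo,
      setLIntegral_Ioo_rpow_mul_eq_hardyKernel hc hpc ht,
      ← ENNReal.ofReal_mul (mul_nonneg (Real.rpow_nonneg ht.1.le _) (sq_nonneg _))]
  calc ∫⁻ x in Ioc 0 1, ENNReal.ofReal (x ^ p * q x ^ 2)
      ≤ ∫⁻ x, w x * ∫⁻ t in Ioi x, ψ t ∂μ ∂μ := setLIntegral_mono' measurableSet_Ioc hsq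
    _ = ∫⁻ t, ψ t * ∫⁻ x in Iio t, w x ∂μ ∂μ := lintegral_mul_setLIntegral_Ioi_eq hw hψ
    _ = _ := setLIntegral_congr_fun measurableSet_Ioc hkernel

theorem add_one_mul_rpow_mul_sub_rpow_add_one_le {m u t : ℝ} (hm : 0 < m) (hu : 0 ≤ u)
    (ht : 0 ≤ t) : (m + 1) * u ^ m * t - t ^ (m + 1) ≤ m * u ^ (m + 1) := by
  have hpq : (m + 1).HolderConjugate ((m + 1) / m) :=
    (Real.holderConjugate_iff_eq_conjExponent (by linarith)).2 (by ring_nf)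
  have hyoung := Real.young_inequality_of_nonneg ht (Real.rpow_nonneg hu m) hpq
  rw [← Real.rpow_mul hu, show m * ((m + 1) / m) = m + 1 by field_simp] at hyoung
  have : (m + 1) * (t * u ^ m) ≤ t ^ (m + 1) + m * u ^ (m + 1) := by
    calc (m + 1) * (t * u ^ m)
        ≤ (m + 1) * (t ^ (m + 1) / (m + 1) + u ^ (m + 1) / ((m + 1) / m)) := by gcongr
      _ = t ^ (m + 1) + m * u ^ (m + 1) := by field_simp
  linarith

/-- The maximum over `t > 0` of `t ^ (1 - K) * t ^ (K / 2 + 1) * hardyKernel (K - 2) (K / 2 + 1) t`,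
attained at `t = (4 * (K - 1) / (K ^ 2 - 4)) ^ (2 / K)`. -/
noncomputable def gpyConst (K : ℝ) : ℝ :=
  4 / (K ^ 2 - 4) * (4 * (K - 1) / (K ^ 2 - 4)) ^ (2 / K)

theorem gpyConst_nonneg {K : ℝ} (hK : 2 < K) : 0 ≤ gpyConst K := by
  have hK4 : 0 < K ^ 2 - 4 := by nlinarith
  exact mul_nonneg (div_nonneg zero_le_four hK4.le)
    (Real.rpow_nonneg (div_nonneg (by linarith) hK4.le) _)

theorem rpow_mul_hardyKernel_le {K t : ℝ} (hK : 2 < K) (ht : 0 < t) :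
    t ^ (K / 2 + 1) * hardyKernel (K - 2) (K / 2 + 1) t ≤ gpyConst K * t ^ (K - 1) := by
  set m := K / 2 with hm
  set A := 4 * (K - 1) / (K ^ 2 - 4) with hA
  set u := A ^ (2 / K) with hu
  have hm1 : 1 < m := by rw [hm]; linarith
  have hK4 : 0 < K ^ 2 - 4 := by nlinarith
  have hA0 : 0 < A := div_pos (by linarith) hK4
  have hu0 : 0 < u := Real.rpow_pos_of_pos hA0 _
  have hum : u ^ m = A := by
    rw [hu, ← Real.rpow_mul hA0.le, show 2 / K * m = 1 by rw [hm]; field_simp, Real.rpow_one]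
  have hyoung := add_one_mul_rpow_mul_sub_rpow_add_one_le (m := m) (by linarith) hu0.le ht.le
  rw [Real.rpow_add_one hu0.ne', hum] at hyoung
  have hkernel : t ^ (m + 1) * hardyKernel (K - 2) (m + 1) t =
      t ^ (K - 1) * ((t / (m - 1) - t ^ (m + 1) / (K - 1)) / m) := by
    have h₁ : t ^ (m + 1) * t ^ (m - 1) = t ^ (K - 1) * t := by
      rw [← Real.rpow_add ht, ← Real.rpow_add_one ht.ne', hm]; ring_nf
    have h₂ : t ^ (m + 1) * t ^ (K - 1) = t ^ (K - 1) * t ^ (m + 1) := mul_comm _ _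
    simp only [hardyKernel]
    rw [show K - 2 + 2 - (m + 1) = m - 1 by rw [hm]; ring, show K - 2 + 1 = K - 1 by ring,
      show m + 1 - 1 = m by ring, mul_div_assoc', mul_sub, mul_div_assoc', mul_div_assoc', h₁, h₂]
    ring
  have hbound : (t / (m - 1) - t ^ (m + 1) / (K - 1)) / m ≤ gpyConst K := by
    rw [gpyConst, ← hA, ← hu, div_le_iff₀ (by linarith)]
    have hcoef : (m + 1) * A = (K - 1) / (m - 1) := by
      rw [hA, hm, show K ^ 2 - 4 = (K - 2) * (K + 2) by ring]
      field_simp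
      ring
    have : t / (m - 1) - t ^ (m + 1) / (K - 1) = ((m + 1) * A * t - t ^ (m + 1)) / (K - 1) := by
      have : m - 1 ≠ 0 := by linarith
      have : K - 1 ≠ 0 := by linarith
      rw [hcoef]
      field_simp
    rw [this, div_le_iff₀ (by linarith)]
    calc (m + 1) * A * t - t ^ (m + 1) ≤ m * (A * u) := hyoung
      _ = 4 / (K ^ 2 - 4) * u * m * (K - 1) := by rw [hA]; ring
  rw [hkernel, mul_comm (gpyConst K)]
  exact mul_le_mul_of_nonneg_left hbound (Real.rpow_nonneg ht.le _)

theorem rpow_neg_le_inv_one_add_mul_log {x s : ℝ} (hx : 1 ≤ x) (hs : 0 ≤ s) :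
    x ^ (-s) ≤ (1 + s * Real.log x)⁻¹ := by
  have hlog : 0 ≤ s * Real.log x := mul_nonneg hs (Real.log_nonneg hx)
  rw [Real.rpow_def_of_pos (by linarith), mul_neg, mul_comm, Real.exp_neg]
  exact inv_anti₀ (by linarith) (by linarith [Real.add_one_le_exp (s * Real.log x)])

theorem logb_two_sub_five_lt_two_mul_log_div_four {x : ℝ} (hx : 1 < x) :
    Real.logb 2 x - 5 < 2 * Real.log (x / 4) := by
  have hL : 0 < Real.log x := Real.log_pos hx
  have hl2 : 0.6931471803 < Real.log 2 := Real.log_two_gt_d9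
  have hl2' : Real.log 2 < 0.6931471808 := Real.log_two_lt_d9
  have hlogb : Real.logb 2 x < 2 * Real.log x := by
    rw [Real.logb, div_lt_iff₀ (by linarith)]; nlinarith
  rw [Real.log_div (by linarith) (by norm_num),
    show (4 : ℝ) = 2 ^ 2 by norm_num, Real.log_pow]
  push_cast
  linarith

theorem two_le_logb_two {x : ℝ} (hx : 4 ≤ x) : 2 ≤ Real.logb 2 x := by
  calc (2 : ℝ) = Real.logb 2 (2 ^ (2 : ℝ)) := by rw [Real.logb_rpow (by norm_num) (by norm_num)]
    _ ≤ Real.logb 2 x := Real.logb_le_logb_of_le one_lt_two (by positivity) (by norm_num; linarith)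

theorem sub_one_mul_gpyConst_lt {K : ℝ} (hK : 4 ≤ K) :
    (K - 1) * gpyConst K < 4 / (K + Real.logb 2 K - 5) := by
  set y := 2 / K * Real.log (K / 4) with hy
  set D := K + Real.logb 2 K - 5
  have hK4 : 0 < K ^ 2 - 4 := by nlinarith
  have hy0 : 0 ≤ y := mul_nonneg (by positivity) (Real.log_nonneg (by linarith))
  have hD0 : 0 < D := by linarith [two_le_logb_two hK]
  have hmax : (4 * (K - 1) / (K ^ 2 - 4)) ^ (2 / K) ≤ (1 + y)⁻¹ :=
    calc (4 * (K - 1) / (K ^ 2 - 4)) ^ (2 / K) ≤ (K / 4) ^ (-(2 / K)) := by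
          rw [Real.rpow_neg (by positivity), ← Real.inv_rpow (by positivity), inv_div]
          gcongr ?_ ^ _
          · exact div_nonneg (by linarith) hK4.le
          · rw [div_le_div_iff₀ hK4 (by positivity)]
            nlinarith
      _ ≤ (1 + y)⁻¹ := rpow_neg_le_inv_one_add_mul_log (by linarith) (by positivity)
  have hDy : D < K * (1 + y) := by
    have := logb_two_sub_five_lt_two_mul_log_div_four (show 1 < K by linarith)
    rw [hy, mul_add, ← mul_assoc, mul_div_cancel₀ _ (by positivity)]
    linarith
  calc (K - 1) * gpyConst K ≤ (K - 1) * (4 / (K ^ 2 - 4) * (1 + y)⁻¹) := by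
        rw [gpyConst]; gcongr; linarith
    _ = 4 * (K - 1) / ((K ^ 2 - 4) * (1 + y)) := by field_simp
    _ < 4 / D := by
        rw [div_lt_div_iff₀ (by positivity) hD0]
        nlinarith [mul_lt_mul_of_pos_left hDy (show 0 < K - 1 by linarith)]

theorem integral_rpow_mul_sq_le_gpyConst_mul {K : ℝ} (hK : 2 < K) {q q' : ℝ → ℝ}
    (hloc : ∀ x ∈ Ioc (0 : ℝ) 1, IntervalIntegrable q' volume x 1)
    (hq : ∀ x ∈ Ioc (0 : ℝ) 1, q x = -∫ t in x..1, q' t)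
    (hfin : IntegrableOn (fun x => x ^ (K - 1) * q' x ^ 2) (Ioc 0 1)) :
    ∫ x in Ioc 0 1, x ^ (K - 2) * q x ^ 2 ≤
      gpyConst K * ∫ x in Ioc 0 1, x ^ (K - 1) * q' x ^ 2 := by
  have hconst := gpyConst_nonneg hK
  have hfin_nonneg : ∀ x ∈ Ioc (0 : ℝ) 1, 0 ≤ x ^ (K - 1) * q' x ^ 2 := fun x hx =>
    mul_nonneg (Real.rpow_nonneg hx.1.le _) (sq_nonneg _)
  refine integral_le_of_lintegral_ofReal_le
    (ae_restrict_of_forall_mem measurableSet_Ioc fun x hx =>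
      mul_nonneg (Real.rpow_nonneg hx.1.le _) (sq_nonneg _))
    (mul_nonneg hconst (setIntegral_nonneg measurableSet_Ioc hfin_nonneg)) ?_
  rw [← integral_const_mul, ofReal_integral_eq_lintegral_ofReal (hfin.const_mul _)
    (ae_restrict_of_forall_mem measurableSet_Ioc fun x hx =>
      mul_nonneg hconst (hfin_nonneg x hx))]
  calc ∫⁻ x in Ioc 0 1, ENNReal.ofReal (x ^ (K - 2) * q x ^ 2)
      ≤ ∫⁻ t in Ioc 0 1, ENNReal.ofReal
          (t ^ (K / 2 + 1) * q' t ^ 2 * hardyKernel (K - 2) (K / 2 + 1) t) :=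
        lintegral_rpow_mul_sq_le_lintegral_hardyKernel (by linarith) (by linarith) hloc hq
    _ ≤ ∫⁻ t in Ioc 0 1, ENNReal.ofReal (gpyConst K * (t ^ (K - 1) * q' t ^ 2)) := by
        refine setLIntegral_mono' measurableSet_Ioc fun t ht => ENNReal.ofReal_le_ofReal ?_
        have h := rpow_mul_hardyKernel_le hK ht.1
        linarith [mul_le_mul_of_nonneg_right h (sq_nonneg (q' t))]

theorem gpy_ratio_lt_sharper_bound (k : ℕ) (hk : 4 ≤ k) (q q' : ℝ → ℝ)
    (hloc : ∀ x ∈ Set.Ioc (0:ℝ) 1, IntervalIntegrable q' volume x 1)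
    (hq : ∀ x ∈ Set.Ioc (0:ℝ) 1, q x = -∫ t in x..1, q' t)
    (hfin : IntegrableOn (fun x => x ^ (k - 1) * (q' x) ^ 2) (Set.Ioc 0 1) volume)
    (hpos : 0 < ∫ x in Set.Ioc (0:ℝ) 1, x ^ (k - 1) * (q' x) ^ 2) :
    ((k : ℝ) - 1) * ∫ x in Set.Ioc (0:ℝ) 1, x ^ (k - 2) * (q x) ^ 2 <
      (4 / ((k : ℝ) + Real.logb 2 (k : ℝ) - 5)) *
        ∫ x in Set.Ioc (0:ℝ) 1, x ^ (k - 1) * (q' x) ^ 2 := by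
  have hK : (4 : ℝ) ≤ k := by exact_mod_cast hk
  have hpow : ∀ (x : ℝ) (n : ℕ), n ≤ k → x ^ (k - n) = x ^ ((k : ℝ) - n) := fun x n hn => by
    rw [← Real.rpow_natCast, Nat.cast_sub hn]
  simp only [hpow _ 2 (by omega), hpow _ 1 (by omega), Nat.cast_ofNat, Nat.cast_one] at hfin hpos ⊢
  calc ((k : ℝ) - 1) * ∫ x in Ioc 0 1, x ^ ((k : ℝ) - 2) * q x ^ 2
      ≤ ((k : ℝ) - 1) * (gpyConst k * ∫ x in Ioc 0 1, x ^ ((k : ℝ) - 1) * q' x ^ 2) :=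
        mul_le_mul_of_nonneg_left
          (integral_rpow_mul_sq_le_gpyConst_mul (by linarith) hloc hq hfin) (by linarith)
    _ = ((k : ℝ) - 1) * gpyConst k * ∫ x in Ioc 0 1, x ^ ((k : ℝ) - 1) * q' x ^ 2 := by ring
    _ < _ := mul_lt_mul_of_pos_right (sub_one_mul_gpyConst_lt hK) hpos
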